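/- Let α ∈ (0,1). The M-Wright function M_α is differentiable at every x > 0, with derivative M_α'(x) = (1/(π·(1−α)²·x²)) · ∫_0^π (α − u_α(φ)·x^(1/(1−α))) · u_α(φ)·x^(1/(1−α)) · exp(−u_α(φ)·x^(1/(1−α))) dφ. -/

import Mathlib

open Real MeasureTheory Set Metric

/-- The auxiliary kernel in the Mikusiński integral representation of the
M-Wright function: `u_α(φ) = (sin(αφ)/sin φ)^(α/(1−α)) · sin((1−α)φ)/sin φ`. -/
noncomputable def mwrightKernel (α φ : ℝ) : ℝ :=
  (Real.sin (α * φ) / Real.sin φ) ^ (α / (1 - α)) *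
    (Real.sin ((1 - α) * φ) / Real.sin φ)

/-- The M-Wright function `M_α`, via its Mikusiński integral representation:
`M_α(x) = (x^(α/(1−α))/(π(1−α))) ∫_0^π u_α(φ) exp(−u_α(φ) x^(1/(1−α))) dφ`. -/
noncomputable def mwright (α x : ℝ) : ℝ :=
  x ^ (α / (1 - α)) / (Real.pi * (1 - α)) *
    ∫ φ in Set.Ioo 0 Real.pi,
      mwrightKernel α φ * Real.exp (-(mwrightKernel α φ) * x ^ (1 / (1 - α)))

lemma mwrightKernel_pos {α : ℝ} (hα0 : 0 < α) (hα1 : α < 1) {φ : ℝ}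
    (hφ : φ ∈ Set.Ioo 0 Real.pi) : 0 < mwrightKernel α φ := by
  obtain ⟨hφ0, hφπ⟩ := hφ
  have hs : 0 < Real.sin φ := Real.sin_pos_of_pos_of_lt_pi hφ0 hφπ
  have hs1 : 0 < Real.sin (α * φ) :=
    Real.sin_pos_of_pos_of_lt_pi (by positivity) (by nlinarith)
  have hs2 : 0 < Real.sin ((1 - α) * φ) :=
    Real.sin_pos_of_pos_of_lt_pi (by nlinarith) (by nlinarith)
  unfold mwrightKernel
  positivity

lemma mwrightKernel_continuousOn {α : ℝ} (hα0 : 0 < α) (hα1 : α < 1) :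
    ContinuousOn (mwrightKernel α) (Set.Ioo 0 Real.pi) := by
  have hs : ∀ φ ∈ Set.Ioo 0 Real.pi, Real.sin φ ≠ 0 := fun φ hφ =>
    (Real.sin_pos_of_pos_of_lt_pi hφ.1 hφ.2).ne'
  have h1 : ContinuousOn (fun φ => Real.sin (α * φ) / Real.sin φ) (Set.Ioo 0 Real.pi) :=
    ((Real.continuous_sin.comp (continuous_const.mul continuous_id)).continuousOn).div
      Real.continuous_sin.continuousOn hs
  have h2 : ContinuousOn (fun φ => Real.sin ((1 - α) * φ) / Real.sin φ) (Set.Ioo 0 Real.pi) :=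
    ((Real.continuous_sin.comp (continuous_const.mul continuous_id)).continuousOn).div
      Real.continuous_sin.continuousOn hs
  exact (h1.rpow_const (fun φ _ => Or.inr (div_nonneg hα0.le (by linarith)))).mul h2

lemma sq_mul_exp_neg_le {t a : ℝ} (ht : 0 ≤ t) (ha : 0 < a) :
    t ^ 2 * Real.exp (-(t * a)) ≤ 4 / a ^ 2 := by
  have e2 : Real.exp (t * a / 2) ^ 2 = Real.exp (t * a) := by
    rw [sq, ← Real.exp_add]; ring_nf
  have key : t ^ 2 * a ^ 2 ≤ 4 * Real.exp (t * a) := by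
    nlinarith [Real.add_one_le_exp (t * a / 2), mul_nonneg ht ha.le,
      Real.exp_pos (t * a / 2)]
  have hexp : (0:ℝ) < Real.exp (t * a) := Real.exp_pos _
  have heq : t ^ 2 * Real.exp (-(t * a)) = t ^ 2 / Real.exp (t * a) := by
    rw [Real.exp_neg]; ring
  rw [heq, div_le_div_iff₀ hexp (by positivity)]
  nlinarith

lemma mul_exp_neg_le {t a : ℝ} (ht : 0 ≤ t) (ha : 0 < a) :
    t * Real.exp (-(t * a)) ≤ 1 / a := by
  have key : t * a ≤ Real.exp (t * a) := by
    nlinarith [Real.add_one_le_exp (t * a), mul_nonneg ht ha.le]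
  have hexp : (0:ℝ) < Real.exp (t * a) := Real.exp_pos _
  rw [Real.exp_neg, ← div_eq_mul_inv, div_le_div_iff₀ hexp ha]
  linarith

/-- The derivative formula for the M-Wright function in the proof of Lemma 8.1(iii):
`M_α'(x) = (1/(π(1−α)²x²)) ∫_0^π (α − u_α(φ)x^(1/(1−α))) u_α(φ)x^(1/(1−α))
  exp(−u_α(φ)x^(1/(1−α))) dφ` for `x > 0`. -/
theorem mwright_hasDerivAt
    (α : ℝ) (hα : α ∈ Set.Ioo (0:ℝ) 1) (x : ℝ) (hx : 0 < x) :
    HasDerivAt (mwright α)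
      ((1 / (Real.pi * (1 - α) ^ 2 * x ^ 2)) *
        ∫ φ in Set.Ioo 0 Real.pi,
          (α - mwrightKernel α φ * x ^ (1 / (1 - α))) *
            (mwrightKernel α φ * x ^ (1 / (1 - α))) *
            Real.exp (-(mwrightKernel α φ) * x ^ (1 / (1 - α)))) x := by
  obtain ⟨hα0, hα1⟩ := hα
  have h1α : (0:ℝ) < 1 - α := by linarith
  set c := α / (1 - α) with hc
  set b := 1 / (1 - α) with hb
  have hbpos : 0 < b := by rw [hb]; positivity
  have hcpos : 0 < c := by rw [hc]; positivity
  have hbc : b = c + 1 := by rw [hb, hc]; field_simp; ring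
  set u := mwrightKernel α with hu
  have hucont : ContinuousOn u (Set.Ioo 0 Real.pi) := mwrightKernel_continuousOn hα0 hα1
  have hupos : ∀ φ ∈ Set.Ioo 0 Real.pi, 0 < u φ := fun φ hφ => mwrightKernel_pos hα0 hα1 hφ
  set μ := volume.restrict (Set.Ioo 0 Real.pi) with hμ
  have haemem : ∀ᵐ φ ∂μ, φ ∈ Set.Ioo 0 Real.pi := ae_restrict_mem measurableSet_Ioo
  -- the parametric family
  set F : ℝ → ℝ → ℝ := fun y φ => u φ * Real.exp (-(u φ) * y ^ b) with hF
  set F' : ℝ → ℝ → ℝ :=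
    fun y φ => u φ * (Real.exp (-(u φ) * y ^ b) * (-(u φ) * (b * y ^ (b - 1)))) with hF'
  have hFmeas : ∀ y : ℝ, AEStronglyMeasurable (F y) μ := by
    intro y
    apply ContinuousOn.aestronglyMeasurable _ measurableSet_Ioo
    exact hucont.mul (Real.continuous_exp.comp_continuousOn
      (hucont.neg.mul continuousOn_const))
  have hF'meas : ∀ y : ℝ, AEStronglyMeasurable (F' y) μ := by
    intro y
    apply ContinuousOn.aestronglyMeasurable _ measurableSet_Ioo
    exact hucont.mul ((Real.continuous_exp.comp_continuousOn
      (hucont.neg.mul continuousOn_const)).mul (hucont.neg.mul continuousOn_const))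
  have hxb : 0 < x ^ b := Real.rpow_pos_of_pos hx b
  have hFint : Integrable (F x) μ := by
    apply Integrable.mono' (g := fun _ => 1 / x ^ b)
      (integrableOn_const measure_Ioo_lt_top.ne) (hFmeas x)
    filter_upwards [haemem] with φ hφ
    have hup := hupos φ hφ
    rw [hF]
    simp only [Real.norm_eq_abs]
    rw [abs_of_nonneg (by positivity)]
    have := mul_exp_neg_le hup.le hxb
    calc u φ * Real.exp (-(u φ) * x ^ b) = u φ * Real.exp (-(u φ * x ^ b)) := by ring_nf
      _ ≤ 1 / x ^ b := this
  -- integrability of the square integrand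
  have hJint : Integrable (fun φ => u φ ^ 2 * Real.exp (-(u φ) * x ^ b)) μ := by
    apply Integrable.mono' (g := fun _ => 4 / (x ^ b) ^ 2)
      (integrableOn_const measure_Ioo_lt_top.ne)
    · apply ContinuousOn.aestronglyMeasurable _ measurableSet_Ioo
      exact (hucont.pow 2).mul (Real.continuous_exp.comp_continuousOn
        (hucont.neg.mul continuousOn_const))
    · filter_upwards [haemem] with φ hφ
      have hup := hupos φ hφ
      simp only [Real.norm_eq_abs]
      rw [abs_of_nonneg (by positivity)]
      have := sq_mul_exp_neg_le hup.le hxb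
      calc u φ ^ 2 * Real.exp (-(u φ) * x ^ b)
          = u φ ^ 2 * Real.exp (-(u φ * x ^ b)) := by ring_nf
        _ ≤ 4 / (x ^ b) ^ 2 := this
  -- the dominating bound
  have hx2 : 0 < x / 2 := by linarith
  have hxb2 : 0 < (x / 2) ^ b := Real.rpow_pos_of_pos hx2 b
  set Bnd : ℝ := b * (x + x / 2) ^ c * (4 / ((x / 2) ^ b) ^ 2) with hBnd
  have h_bound : ∀ᵐ φ ∂μ, ∀ y ∈ ball x (x / 2), ‖F' y φ‖ ≤ Bnd := by
    filter_upwards [haemem] with φ hφ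
    intro y hy
    rw [mem_ball, Real.dist_eq, abs_lt] at hy
    have hy0 : x / 2 < y := by linarith
    have hy1 : y < x + x / 2 := by linarith
    have hypos : 0 < y := lt_trans hx2 hy0
    have hup := hupos φ hφ
    have hyb : 0 < y ^ b := Real.rpow_pos_of_pos hypos b
    rw [hF']
    simp only [Real.norm_eq_abs]
    have habs : |u φ * (Real.exp (-(u φ) * y ^ b) * (-(u φ) * (b * y ^ (b - 1))))|
        = b * y ^ (b - 1) * (u φ ^ 2 * Real.exp (-(u φ * y ^ b))) := by
      rw [abs_mul, abs_mul, abs_mul, abs_mul,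
        abs_of_nonneg hup.le, abs_of_nonneg (Real.exp_nonneg _), abs_neg,
        abs_of_nonneg hup.le, abs_of_nonneg hbpos.le,
        abs_of_nonneg (Real.rpow_nonneg hypos.le _)]
      ring_nf
    rw [habs]
    have hb1 : y ^ (b - 1) ≤ (x + x / 2) ^ c := by
      rw [show b - 1 = c by linarith [hbc]]
      exact Real.rpow_le_rpow hypos.le hy1.le hcpos.le
    have hsq : u φ ^ 2 * Real.exp (-(u φ * y ^ b)) ≤ 4 / ((x / 2) ^ b) ^ 2 := by
      have hmono : (x / 2) ^ b ≤ y ^ b := Real.rpow_le_rpow hx2.le hy0.le hbpos.le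
      calc u φ ^ 2 * Real.exp (-(u φ * y ^ b))
          ≤ u φ ^ 2 * Real.exp (-(u φ * (x / 2) ^ b)) := by
            apply mul_le_mul_of_nonneg_left _ (by positivity)
            apply Real.exp_le_exp.2
            simp only [neg_le_neg_iff]
            exact mul_le_mul_of_nonneg_left hmono hup.le
        _ ≤ 4 / ((x / 2) ^ b) ^ 2 := sq_mul_exp_neg_le hup.le hxb2
    calc b * y ^ (b - 1) * (u φ ^ 2 * Real.exp (-(u φ * y ^ b)))
        ≤ b * (x + x / 2) ^ c * (4 / ((x / 2) ^ b) ^ 2) := by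
          apply mul_le_mul _ hsq (by positivity) (by positivity)
          exact mul_le_mul_of_nonneg_left hb1 hbpos.le
      _ = Bnd := rfl
  have h_diff : ∀ᵐ φ ∂μ, ∀ y ∈ ball x (x / 2), HasDerivAt (F · φ) (F' y φ) y := by
    filter_upwards with φ
    intro y hy
    rw [mem_ball, Real.dist_eq, abs_lt] at hy
    have hypos : 0 < y := by linarith
    have h1 : HasDerivAt (fun z : ℝ => z ^ b) (b * y ^ (b - 1)) y :=
      Real.hasDerivAt_rpow_const (Or.inl hypos.ne')
    have h2 : HasDerivAt (fun z : ℝ => -(u φ) * z ^ b) (-(u φ) * (b * y ^ (b - 1))) y :=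
      h1.const_mul _
    exact (h2.exp.const_mul (u φ))
  obtain ⟨hF'int, hderivI⟩ := hasDerivAt_integral_of_dominated_loc_of_deriv_le
    (μ := μ) (F := F) (F' := F') (bound := fun _ => Bnd) (ball_mem_nhds x hx2)
    (Filter.Eventually.of_forall hFmeas) hFint (hF'meas x) h_bound
    (integrableOn_const measure_Ioo_lt_top.ne) h_diff
  -- derivative of the prefactor
  have hg : HasDerivAt (fun y : ℝ => y ^ c / (Real.pi * (1 - α)))
      (c * x ^ (c - 1) / (Real.pi * (1 - α))) x :=
    (Real.hasDerivAt_rpow_const (Or.inl hx.ne')).div_const _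
  have hmain : HasDerivAt (mwright α)
      (c * x ^ (c - 1) / (Real.pi * (1 - α)) * (∫ φ, F x φ ∂μ)
        + x ^ c / (Real.pi * (1 - α)) * (∫ φ, F' x φ ∂μ)) x := by
    have := hg.mul hderivI
    convert this using 2
    all_goals rfl
  -- now identify the derivative value
  set I : ℝ := ∫ φ, F x φ ∂μ with hI
  set J : ℝ := ∫ φ, u φ ^ 2 * Real.exp (-(u φ) * x ^ b) ∂μ with hJ
  have hJ' : (∫ φ, F' x φ ∂μ) = -(b * x ^ (b - 1)) * J := by
    rw [hJ, ← integral_const_mul]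
    apply integral_congr_ae
    filter_upwards with φ
    rw [hF']
    ring
  have hT : (∫ φ, (α - u φ * x ^ b) * (u φ * x ^ b) * Real.exp (-(u φ) * x ^ b) ∂μ)
      = α * x ^ b * I - x ^ b * x ^ b * J := by
    have heq : (fun φ => (α - u φ * x ^ b) * (u φ * x ^ b) * Real.exp (-(u φ) * x ^ b))
        = fun φ => α * x ^ b * F x φ - x ^ b * x ^ b * (u φ ^ 2 * Real.exp (-(u φ) * x ^ b)) := by
      funext φ; rw [hF]; ring
    rw [heq, integral_sub (hFint.const_mul _) (hJint.const_mul _),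
      integral_const_mul, integral_const_mul, hI, hJ]
  rw [hT] at *
  -- final algebra
  have hπ : Real.pi ≠ 0 := Real.pi_ne_zero
  have hrw1 : x ^ (c - 1) = x ^ b / x ^ 2 := by
    rw [show c - 1 = b - 2 by linarith [hbc], Real.rpow_sub hx,
      show (2:ℝ) = ((2:ℕ):ℝ) by norm_num, Real.rpow_natCast]
  have hrw2 : x ^ c * x ^ (b - 1) = x ^ b * x ^ b / x ^ 2 := by
    rw [← Real.rpow_add hx, show c + (b - 1) = b + b - 2 by linarith [hbc],
      Real.rpow_sub hx, Real.rpow_add hx,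
      show (2:ℝ) = ((2:ℕ):ℝ) by norm_num, Real.rpow_natCast]
  convert hmain using 1
  rw [hJ']
  have h1αne : (1 - α) ≠ 0 := h1α.ne'
  have hxne : x ≠ 0 := hx.ne'
  have h1 : c * x ^ (c - 1) / (Real.pi * (1 - α)) * I
      = α * x ^ b * I / (Real.pi * (1 - α) ^ 2 * x ^ 2) := by
    rw [hrw1, hc]
    field_simp
  have h2 : x ^ c / (Real.pi * (1 - α)) * (-(b * x ^ (b - 1)) * J)
      = -(x ^ b * x ^ b * J) / (Real.pi * (1 - α) ^ 2 * x ^ 2) := by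
    have e : x ^ c / (Real.pi * (1 - α)) * (-(b * x ^ (b - 1)) * J)
        = -(b * (x ^ c * x ^ (b - 1)) * J) / (Real.pi * (1 - α)) := by ring
    rw [e, hrw2, hb]
    field_simp
  rw [h1, h2]
  ring
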